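/- For c ≥ 14/5, δ ∈ [0, 1/10], and all t ≥ -c/2: ζ_{c,δ}(t) ≤ (c/20)·(8(c+2) + 4c/(1-2δ) + ((c-2)(c(43-54δ)-22-20δ))/(c(7-20δ+20δ²)-4)). -/

import Mathlib

/-!
Write `w = 2t + c`. The denominator of `ζ_{c,δ}(t)` is `E + 2w`, where `E = zetaEndDenom c δ` is
its value at `t = -c/2`, and clearing denominators factors the gap as
`ζ(-c/2) - ζ(t) = w (1 - 2δ) c (5 E w + R) / (20 E (E + 2w))` with `R = zetaGapConst c δ`.
For `c ≥ 14/5` and `δ ∈ [0, 1/10]` both `E` and `R` are positive, so the gap is nonnegative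
for `w ≥ 0`.
-/

noncomputable def zeta (c δ t : ℝ) : ℝ :=
  c / (5 * (1 - 2 * δ)) *
    (((c * (3 - 4 * δ) + t - 1) * (4 * c * (3 - 4 * δ) + (7 + 4 * δ - 20 * δ ^ 2) * (t - 1))) /
        (c * (9 - 20 * δ + 20 * δ ^ 2) + 4 * (t - 1)) -
      (3 - 4 * δ) * (t - 1))

def zetaEndDenom (c δ : ℝ) : ℝ := c * (7 - 20 * δ + 20 * δ ^ 2) - 4

def zetaGapConst (c δ : ℝ) : ℝ :=
  40 - 20 * c * (7 - 20 * δ + 20 * δ ^ 2) + c ^ 2 * (100 - 760 * δ + 1960 * δ ^ 2 - 1600 * δ ^ 3)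

section

variable {c δ : ℝ}

theorem zeta_denom_eq (t : ℝ) :
    c * (9 - 20 * δ + 20 * δ ^ 2) + 4 * (t - 1) = zetaEndDenom c δ + 2 * (2 * t + c) := by
  rw [zetaEndDenom]
  ring

theorem zeta_neg_half (hδ : 1 - 2 * δ ≠ 0) (hE : zetaEndDenom c δ ≠ 0) :
    zeta c δ (-(c / 2)) =
      c / 20 * (8 * (c + 2) + 4 * c / (1 - 2 * δ) +
        (c - 2) * (c * (43 - 54 * δ) - 22 - 20 * δ) / zetaEndDenom c δ) := by
  unfold zeta
  rw [zeta_denom_eq, show 2 * -(c / 2) + c = 0 by ring, mul_zero, add_zero]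
  -- `field_simp` does not recognise `hE` once it has normalised the quadratic in `δ`
  generalize hQ : 7 - 20 * δ + 20 * δ ^ 2 = Q
  rw [zetaEndDenom, hQ] at hE ⊢
  field_simp
  rw [← hQ]
  ring

theorem zeta_neg_half_sub_zeta (t : ℝ) (hδ : 1 - 2 * δ ≠ 0) (hE : zetaEndDenom c δ ≠ 0)
    (hD : zetaEndDenom c δ + 2 * (2 * t + c) ≠ 0) :
    zeta c δ (-(c / 2)) - zeta c δ t =
      (2 * t + c) * (1 - 2 * δ) * c * (5 * zetaEndDenom c δ * (2 * t + c) + zetaGapConst c δ) /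
        (20 * zetaEndDenom c δ * (zetaEndDenom c δ + 2 * (2 * t + c))) := by
  unfold zeta
  rw [zeta_denom_eq, zeta_denom_eq, show 2 * -(c / 2) + c = 0 by ring, mul_zero, add_zero,
    zetaGapConst]
  generalize hQ : 7 - 20 * δ + 20 * δ ^ 2 = Q
  rw [zetaEndDenom, hQ] at hE hD ⊢
  field_simp
  rw [← hQ]
  ring

theorem zeta_le_zeta_neg_half {t : ℝ} (hc : 0 ≤ c) (hδ : 0 < 1 - 2 * δ)
    (hE : 0 < zetaEndDenom c δ) (hR : 0 ≤ zetaGapConst c δ) (ht : -(c / 2) ≤ t) :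
    zeta c δ t ≤ zeta c δ (-(c / 2)) := by
  have hw : 0 ≤ 2 * t + c := by linarith
  rw [← sub_nonneg, zeta_neg_half_sub_zeta t hδ.ne' hE.ne' (by positivity)]
  apply div_nonneg
  · exact mul_nonneg (by positivity) (by positivity)
  · positivity

theorem zetaEndDenom_pos (hc : 14 / 5 ≤ c) (hδ : δ ≤ 1 / 10) : 0 < zetaEndDenom c δ := by
  have hQ : 5 ≤ 7 - 20 * δ + 20 * δ ^ 2 := by nlinarith
  rw [zetaEndDenom]
  nlinarith

theorem zetaGapConst_nonneg (hc : 14 / 5 ≤ c) (hδ : δ ∈ Set.Icc (0 : ℝ) (1 / 10)) :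
    0 ≤ zetaGapConst c δ := by
  obtain ⟨hδ₀, hδ₁⟩ := hδ
  have hδδ := mul_nonneg hδ₀ (sub_nonneg.2 hδ₁)
  have hδδδ := mul_nonneg (mul_nonneg hδ₀ hδ₀) (sub_nonneg.2 hδ₁)
  -- `R = 40 + c (c S - 20 Q)` with `S ≥ 0` and `20 Q ≤ (14/5) S ≤ c S`
  have hS : 0 ≤ 100 - 760 * δ + 1960 * δ ^ 2 - 1600 * δ ^ 3 := by nlinarith
  have hSQ : 20 * (7 - 20 * δ + 20 * δ ^ 2) ≤
      14 / 5 * (100 - 760 * δ + 1960 * δ ^ 2 - 1600 * δ ^ 3) := by nlinarith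
  rw [zetaGapConst]
  nlinarith [mul_nonneg (sub_nonneg.2 hc) hS]

end

/-- For `c ≥ 14/5`, `δ ∈ [0, 1/10]`, and all `t ≥ -c/2`, the value `ζ_{c,δ}(t)` is bounded
above by `ζ_{c,δ}(-c/2)` in its closed form. -/
theorem zeta_le_value_at_left_endpoint (c δ t : ℝ) (hc : 14 / 5 ≤ c)
    (hδ : δ ∈ Set.Icc (0 : ℝ) (1 / 10)) (ht : -(c / 2) ≤ t) :
    c / (5 * (1 - 2 * δ)) *
        (((c * (3 - 4 * δ) + t - 1) *
            (4 * c * (3 - 4 * δ) + (7 + 4 * δ - 20 * δ ^ 2) * (t - 1))) /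
              (c * (9 - 20 * δ + 20 * δ ^ 2) + 4 * (t - 1)) -
          (3 - 4 * δ) * (t - 1)) ≤
      c / 20 * (8 * (c + 2) + 4 * c / (1 - 2 * δ) +
        (c - 2) * (c * (43 - 54 * δ) - 22 - 20 * δ) / (c * (7 - 20 * δ + 20 * δ ^ 2) - 4)) := by
  have hδ₂ : 0 < 1 - 2 * δ := by linarith [hδ.2]
  have hE := zetaEndDenom_pos hc hδ.2
  have hbound := zeta_le_zeta_neg_half (by linarith) hδ₂ hE (zetaGapConst_nonneg hc hδ) ht
  rwa [zeta_neg_half hδ₂.ne' hE.ne'] at hbound
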